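/- arXiv:0901.0695 — 4 statements merged into one kernel-verified Lean document; each statement's English description precedes it below -/
import Mathlib

section
/- Let p ≥ 0 and let (X,d) be a metric space. Then (X,d) has p-negative type if and only if (X,d) has generalized roundness p. -/
open scoped BigOperators

/-- The kernel `d(x,y)^p`, with the convention that it vanishes on the diagonal
(this matters only when `p = 0`). -/
noncomputable def negKer {X : Type*} [MetricSpace X] (p : ℝ) (x y : X) : ℝ :=
  @ite ℝ (x = y) (Classical.dec _) 0 (dist x y ^ p)

/-- `(X,d)` has `p`-negative type: for all `k ≥ 2`, pairwise distinct points
`x₁,…,x_k` and reals `η₁,…,η_k` summing to zero,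
`∑_{i,j} d(xᵢ,xⱼ)^p ηᵢ ηⱼ ≤ 0`. -/
def HasNegType (X : Type*) [MetricSpace X] (p : ℝ) : Prop :=
  ∀ (k : ℕ), 2 ≤ k → ∀ (x : Fin k → X), Function.Injective x →
    ∀ (η : Fin k → ℝ), (∑ i, η i) = 0 →
      (∑ i, ∑ j, negKer p (x i) (x j) * η i * η j) ≤ 0

/-- `(X,d)` has strict `p`-negative type: `p`-negative type, with strict
inequality whenever `η ≠ 0`. -/
def HasStrictNegType (X : Type*) [MetricSpace X] (p : ℝ) : Prop :=
  HasNegType X p ∧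
  ∀ (k : ℕ), 2 ≤ k → ∀ (x : Fin k → X), Function.Injective x →
    ∀ (η : Fin k → ℝ), (∑ i, η i) = 0 → η ≠ 0 →
      (∑ i, ∑ j, negKer p (x i) (x j) * η i * η j) < 0

/-- A normalized `(s,t)`-simplex in `X`: `s+t` pairwise distinct points
`a₁,…,a_s,b₁,…,b_t` with positive weights `m`, `n`, each family summing to `1`. -/
structure IsNormSimplex {X : Type*} [MetricSpace X] {s t : ℕ}
    (a : Fin s → X) (b : Fin t → X) (m : Fin s → ℝ) (n : Fin t → ℝ) : Prop where
  inj_a : Function.Injective a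
  inj_b : Function.Injective b
  disj : ∀ j i, a j ≠ b i
  m_pos : ∀ j, 0 < m j
  n_pos : ∀ i, 0 < n i
  m_sum : (∑ j, m j) = 1
  n_sum : (∑ i, n i) = 1

/-- The `p`-negative type simplex gap `γ_D^p(ω)` of a loaded `(s,t)`-simplex. -/
noncomputable def simplexGap {X : Type*} [MetricSpace X] (p : ℝ) {s t : ℕ}
    (a : Fin s → X) (b : Fin t → X) (m : Fin s → ℝ) (n : Fin t → ℝ) : ℝ :=
  (∑ j, ∑ i, m j * n i * dist (a j) (b i) ^ p)
    - (∑ j₁, ∑ j₂, if j₁ < j₂ then m j₁ * m j₂ * dist (a j₁) (a j₂) ^ p else 0)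
    - (∑ i₁, ∑ i₂, if i₁ < i₂ then n i₁ * n i₂ * dist (b i₁) (b i₂) ^ p else 0)

/-- `(X,d)` has generalized roundness `p`. -/
def HasGenRoundness (X : Type*) [MetricSpace X] (p : ℝ) : Prop :=
  ∀ (s t : ℕ) (a : Fin s → X) (b : Fin t → X) (m : Fin s → ℝ) (n : Fin t → ℝ),
    IsNormSimplex a b m n → 0 ≤ simplexGap p a b m n

/-!
Split zero-sum weights `η` into their positive part `m` and negative part `-n`, of common mass
`M`, carried by points `a` and `b`. Since `d(x,y)^p` is symmetric and vanishes on the diagonal,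
the quadratic form `∑_{i,j} d(xᵢ,xⱼ)^p ηᵢ ηⱼ` equals `-2 M² γ`, where `γ` is the simplex gap of
the normalized simplex `(a, b, m/M, n/M)`. Conversely every normalized simplex arises this way
with `M = 1`. Hence the form is nonpositive exactly when every gap is nonnegative.
-/

open Finset Function

section negKer

variable {X : Type*} [MetricSpace X] (p : ℝ)

lemma negKer_self (x : X) : negKer p x x = 0 := by
  simp [negKer]

lemma negKer_of_ne {x y : X} (h : x ≠ y) : negKer p x y = dist x y ^ p := by
  simp [negKer, h]

lemma negKer_comm (x y : X) : negKer p x y = negKer p y x := by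
  by_cases h : x = y
  · rw [h]
  · rw [negKer_of_ne p h, negKer_of_ne p (Ne.symm h), dist_comm]

end negKer

lemma sum_sum_eq_two_nsmul_sum_sum_lt {ι M : Type*} [Fintype ι] [LinearOrder ι]
    [AddCommMonoid M] (F : ι → ι → M) (hsymm : ∀ i j, F i j = F j i) (hdiag : ∀ i, F i i = 0) :
    ∑ i, ∑ j, F i j = 2 • ∑ i, ∑ j, if i < j then F i j else 0 := by
  have hsplit : ∀ i j, F i j = (if i < j then F i j else 0) + (if j < i then F j i else 0) := by
    intro i j
    rcases lt_trichotomy i j with h | rfl | h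
    · simp [h, h.not_gt]
    · simp [hdiag]
    · simp [h, h.not_gt, hsymm i j]
  rw [Fintype.sum_congr _ _ fun i => Fintype.sum_congr _ _ fun j => hsplit i j]
  simp only [sum_add_distrib, two_nsmul]
  rw [sum_comm (f := fun i j => if j < i then F j i else 0)]

section negTypeForm

variable {X : Type*} [MetricSpace X] (p : ℝ) {ι κ : Type*} [Fintype ι] [Fintype κ]

noncomputable def negTypeForm (x : ι → X) (η : ι → ℝ) : ℝ :=
  ∑ i, ∑ j, negKer p (x i) (x j) * η i * η j

lemma negTypeForm_comp_of_injective (x : ι → X) {η : ι → ℝ} {e : κ → ι} (he : Injective e)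
    (hη : ∀ i ∉ Set.range e, η i = 0) :
    negTypeForm p (x ∘ e) (η ∘ e) = negTypeForm p x η := by
  refine Fintype.sum_of_injective e he _ _ (fun i hi => by simp [hη i hi]) fun k => ?_
  exact Fintype.sum_of_injective e he _ _ (fun j hj => by simp [hη j hj]) fun _ => rfl

lemma negTypeForm_smul (x : ι → X) (c : ℝ) (η : ι → ℝ) :
    negTypeForm p x (c • η) = c ^ 2 * negTypeForm p x η := by
  simp only [negTypeForm, mul_sum, Pi.smul_apply, smul_eq_mul]
  congr! 2
  ring

lemma negTypeForm_of_subsingleton [Subsingleton ι] (x : ι → X) (η : ι → ℝ) :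
    negTypeForm p x η = 0 := by
  refine Fintype.sum_eq_zero _ fun i => Fintype.sum_eq_zero _ fun j => ?_
  rw [Subsingleton.elim j i, negKer_self, zero_mul, zero_mul]

lemma negTypeForm_eq_two_mul_sum_sum_lt [LinearOrder ι] {x : ι → X} (hx : Injective x)
    (η : ι → ℝ) :
    negTypeForm p x η
      = 2 * ∑ i, ∑ j, if i < j then η i * η j * dist (x i) (x j) ^ p else 0 := by
  rw [negTypeForm, sum_sum_eq_two_nsmul_sum_sum_lt _ (fun i j => by rw [negKer_comm]; ring)
    (fun i => by rw [negKer_self, zero_mul, zero_mul]), nsmul_eq_mul, Nat.cast_ofNat]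
  congr! 3 with i - j -
  split_ifs with h
  · rw [negKer_of_ne p (hx.ne h.ne)]; ring
  · rfl

lemma negTypeForm_sumElim {s t : ℕ} {a : Fin s → X} {b : Fin t → X} (ha : Injective a)
    (hb : Injective b) (hab : ∀ j i, a j ≠ b i) (m : Fin s → ℝ) (n : Fin t → ℝ) :
    negTypeForm p (Sum.elim a b) (Sum.elim m (-n)) = -2 * simplexGap p a b m n := by
  have hcross : ∑ j, ∑ i, negKer p (a j) (b i) * m j * (-n) i
      = -∑ j, ∑ i, m j * n i * dist (a j) (b i) ^ p := by
    simp only [← sum_neg_distrib, negKer_of_ne p (hab _ _), Pi.neg_apply]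
    congr! 2
    ring
  have hcross' : ∑ i, ∑ j, negKer p (b i) (a j) * (-n) i * m j
      = ∑ j, ∑ i, negKer p (a j) (b i) * m j * (-n) i := by
    rw [sum_comm]
    congr! 2
    rw [negKer_comm]; ring
  have haa := negTypeForm_eq_two_mul_sum_sum_lt p ha m
  have hbb : negTypeForm p b (-n)
      = 2 * ∑ i₁, ∑ i₂, if i₁ < i₂ then n i₁ * n i₂ * dist (b i₁) (b i₂) ^ p else 0 := by
    rw [← negTypeForm_eq_two_mul_sum_sum_lt p hb, ← neg_one_smul ℝ n, negTypeForm_smul]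
    norm_num
  unfold negTypeForm at haa hbb
  simp only [negTypeForm, Fintype.sum_sum_type, Sum.elim_inl, Sum.elim_inr, sum_add_distrib]
  rw [haa, hbb, hcross', hcross, simplexGap]
  ring

end negTypeForm

section

variable {X : Type*} [MetricSpace X] {p : ℝ}

theorem HasNegType.negTypeForm_nonpos (h : HasNegType X p) {ι : Type*} [Fintype ι] {x : ι → X}
    (hx : Injective x) {η : ι → ℝ} (hη : ∑ i, η i = 0) : negTypeForm p x η ≤ 0 := by
  rcases le_or_gt (Fintype.card ι) 1 with hcard | hcard
  · have := Fintype.card_le_one_iff_subsingleton.mp hcard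
    rw [negTypeForm_of_subsingleton]
  · let e := (Fintype.equivFin ι).symm
    rw [← negTypeForm_comp_of_injective p x e.injective (by simp)]
    exact h _ hcard _ (hx.comp e.injective) _ ((Equiv.sum_comp e η).trans hη)

theorem HasNegType.hasGenRoundness (h : HasNegType X p) : HasGenRoundness X p := by
  intro s t a b m n hS
  have hform := h.negTypeForm_nonpos (hS.inj_a.sumElim hS.inj_b hS.disj)
    (η := Sum.elim m (-n)) (by simp [Fintype.sum_sum_type, hS.m_sum, hS.n_sum])
  rw [negTypeForm_sumElim p hS.inj_a hS.inj_b hS.disj] at hform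
  linarith

theorem HasGenRoundness.negTypeForm_sumElim_nonpos (h : HasGenRoundness X p) {s t : ℕ}
    {a : Fin s → X} {b : Fin t → X} (ha : Injective a) (hb : Injective b)
    (hab : ∀ j i, a j ≠ b i) {m : Fin s → ℝ} {n : Fin t → ℝ} (hm : ∀ j, 0 < m j)
    (hn : ∀ i, 0 < n i) (hmn : ∑ j, m j = ∑ i, n i) :
    negTypeForm p (Sum.elim a b) (Sum.elim m (-n)) ≤ 0 := by
  set M := ∑ j, m j
  obtain hM | hM : 0 = M ∨ 0 < M := (sum_nonneg fun j _ => (hm j).le).eq_or_lt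
  · have hm0 : m = 0 := (Fintype.sum_eq_zero_iff_of_nonneg fun j => (hm j).le).1 hM.symm
    have hn0 : n = 0 := (Fintype.sum_eq_zero_iff_of_nonneg fun i => (hn i).le).1 (hmn ▸ hM.symm)
    simp [negTypeForm, hm0, hn0]
  have hS : IsNormSimplex a b (M⁻¹ • m) (M⁻¹ • n) :=
    { inj_a := ha, inj_b := hb, disj := hab
      m_pos := fun j => smul_pos (inv_pos.2 hM) (hm j)
      n_pos := fun i => smul_pos (inv_pos.2 hM) (hn i)
      m_sum := by
        simp only [Pi.smul_apply, smul_eq_mul, ← mul_sum]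
        exact inv_mul_cancel₀ hM.ne'
      n_sum := by
        simp only [Pi.smul_apply, smul_eq_mul, ← mul_sum, ← hmn]
        exact inv_mul_cancel₀ hM.ne' }
  have hscale : Sum.elim m (-n) = M • Sum.elim (M⁻¹ • m) (-(M⁻¹ • n)) := by
    ext (j | i) <;> simp [mul_inv_cancel_left₀ hM.ne']
  rw [hscale, negTypeForm_smul, negTypeForm_sumElim p ha hb hab]
  nlinarith [h s t a b _ _ hS]

theorem HasGenRoundness.negTypeForm_nonpos (h : HasGenRoundness X p) {ι : Type*} [Fintype ι]
    {x : ι → X} (hx : Injective x) {η : ι → ℝ} (hη : ∑ i, η i = 0) :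
    negTypeForm p x η ≤ 0 := by
  classical
  let P := {i // 0 < η i}
  let N := {i // η i < 0}
  let e : Fin (Fintype.card P) ⊕ Fin (Fintype.card N) → ι :=
    Sum.elim (fun j => (Fintype.equivFin P).symm j) (fun j => (Fintype.equivFin N).symm j)
  have hpos (j) : 0 < η (e (.inl j)) := ((Fintype.equivFin P).symm j).2
  have hneg (j) : η (e (.inr j)) < 0 := ((Fintype.equivFin N).symm j).2
  have he : Injective e :=
    (Subtype.val_injective.comp (Fintype.equivFin P).symm.injective).sumElim
      (Subtype.val_injective.comp (Fintype.equivFin N).symm.injective)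
      fun j k hjk => (hpos j).asymm ((congrArg η hjk).trans_lt (hneg k))
  have hsupp : ∀ i ∉ Set.range e, η i = 0 := by
    intro i hi
    by_contra hne
    rcases lt_or_gt_of_ne hne with hlt | hgt
    · exact hi ⟨.inr (Fintype.equivFin N ⟨i, hlt⟩), by simp [e]⟩
    · exact hi ⟨.inl (Fintype.equivFin P ⟨i, hgt⟩), by simp [e]⟩
  have hsum : ∑ u, η (e u) = 0 := (Fintype.sum_of_injective e he _ _ hsupp fun _ => rfl).trans hη
  rw [← negTypeForm_comp_of_injective p x he hsupp, ← Sum.elim_comp_inl_inr (x ∘ e),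
    ← Sum.elim_comp_inl_inr (η ∘ e), ← neg_neg ((η ∘ e) ∘ Sum.inr)]
  refine h.negTypeForm_sumElim_nonpos (hx.comp he |>.comp Sum.inl_injective)
    (hx.comp he |>.comp Sum.inr_injective) (fun j k => (hx.comp he).ne Sum.inl_ne_inr) hpos
    (fun j => neg_pos.2 (hneg j)) ?_
  rw [Fintype.sum_sum_type] at hsum
  simp only [Function.comp_apply, Pi.neg_apply, sum_neg_distrib]
  linarith

theorem HasGenRoundness.hasNegType (h : HasGenRoundness X p) : HasNegType X p :=
  fun _ _ _ hx _ hη => h.negTypeForm_nonpos hx hη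

end

theorem negType_iff_genRoundness_general {X : Type*} [MetricSpace X] (p : ℝ) :
    HasNegType X p ↔ HasGenRoundness X p :=
  ⟨HasNegType.hasGenRoundness, HasGenRoundness.hasNegType⟩

/-- A metric space has `p`-negative type iff it has generalized roundness `p`. -/
theorem negType_iff_genRoundness {X : Type*} [MetricSpace X] (p : ℝ) (hp : 0 ≤ p) :
    HasNegType X p ↔ HasGenRoundness X p :=
  negType_iff_genRoundness_general p
end

section
/- Let T be a finite tree on n ≥ 3 vertices endowed with the ordinary path metric d (each edge has length one), let 𝔇 denote the metric diameter of (T,d), and let ℘_T denote the maximal p-negative type of (T,d), i.e. ℘_T = sup{p ≥ 0 : (T,d) has p-negative type}. Then ℘_T ≥ 1 + ln(1 + 1/(𝔇 · (n−1) · γ(n)))/ln 𝔇. -/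
/-!
Root the tree at `r` and let `A u` (`ancestors r u`) be the vertex set of the path from `r` to
`u`. Then `d(u,v) = #(A u ∆ A v)`, so for weights `η` of total mass zero
`∑ d(u,v) ηᵤ η_v = -2 ∑ₓ F(x)²`, where `F(x)` (`subtreeSum`) is the weight of the subtree below
`x`, and `F(r) = 0`. Telescoping the indicator `f` of `{η ≥ 0}` along root paths gives
`M := ∑ η⁺ = ∑_{x ≠ r} (f x - f (parent x)) F(x)`, hence `M² ≤ (n-1) ∑ F²` by Cauchy–Schwarz.

Passing from `d` to `d^p` with `𝔇^(p-1) = 1 + ε` raises the form only through the pairs with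
`ηᵤη_v > 0` (as `d ≥ 1`), each by at most `ε 𝔇 ηᵤη_v`; over `u ≠ v` these products sum to
`2M² - ∑ η² ≤ 2γ(n)M²` (Cauchy–Schwarz on the supports of `η⁺` and `η⁻`). The choice of `ε`
makes this loss exactly the gain `2M²/(n-1)`. A geodesic `x - y - z` forces `p ≤ 2` for every
`p` of negative type, so the supremum is finite.
-/

open scoped BigOperators

/-- `γ(m) = 1 - (1/2)(1/⌊m/2⌋ + 1/⌈m/2⌉)`. -/
noncomputable def gammaFn (m : ℕ) : ℝ :=
  1 - (1 / 2) * ((1 : ℝ) / ((m / 2 : ℕ) : ℝ) + (1 : ℝ) / (((m + 1) / 2 : ℕ) : ℝ))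

open Finset
open scoped symmDiff

lemma gammaFn_pos {n : ℕ} (hn : 3 ≤ n) : 0 < gammaFn n := by
  have hk : (1 : ℝ) ≤ (n / 2 : ℕ) := by exact_mod_cast (show 1 ≤ n / 2 by omega)
  have hl : (2 : ℝ) ≤ ((n + 1) / 2 : ℕ) := by exact_mod_cast (show 2 ≤ (n + 1) / 2 by omega)
  have h1 : (1 : ℝ) / (n / 2 : ℕ) ≤ 1 := div_le_one_of_le₀ hk (by positivity)
  have h2 : (1 : ℝ) / ((n + 1) / 2 : ℕ) ≤ 1 / 2 := one_div_le_one_div_of_le two_pos hl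
  rw [gammaFn]
  linarith

lemma mul_sub_le_div_two_mul_succ_div_two (a n : ℕ) :
    (a : ℝ) * (n - a) ≤ (n / 2 : ℕ) * ((n + 1) / 2 : ℕ) := by
  obtain ⟨m, rfl | rfl⟩ := Nat.even_or_odd' n
  · rw [show 2 * m / 2 = m by omega, show (2 * m + 1) / 2 = m by omega]
    push_cast
    nlinarith [sq_nonneg ((a : ℝ) - m)]
  · rw [show (2 * m + 1) / 2 = m by omega, show (2 * m + 1 + 1) / 2 = m + 1 by omega]
    push_cast
    rcases le_or_gt a m with h | h
    · have : (a : ℝ) ≤ m := by exact_mod_cast h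
      nlinarith
    · have : (m : ℝ) + 1 ≤ a := by exact_mod_cast h
      nlinarith

lemma two_mul_one_sub_gammaFn_le {a b n : ℕ} (ha : 0 < a) (hb : 0 < b) (hab : a + b ≤ n) :
    2 * (1 - gammaFn n) ≤ 1 / a + 1 / b := by
  have hk : (0 : ℝ) < (n / 2 : ℕ) := by exact_mod_cast (show 0 < n / 2 by omega)
  have hl : (0 : ℝ) < ((n + 1) / 2 : ℕ) := by exact_mod_cast (show 0 < (n + 1) / 2 by omega)
  have hkl : ((n / 2 : ℕ) : ℝ) + ((n + 1) / 2 : ℕ) = n := by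
    exact_mod_cast (show n / 2 + (n + 1) / 2 = n by omega)
  have ha' : (0 : ℝ) < a := by exact_mod_cast ha
  have hb' : (0 : ℝ) < b := by exact_mod_cast hb
  have hbn : (b : ℝ) ≤ n - a := by
    rw [le_sub_iff_add_le']
    exact_mod_cast hab
  calc 2 * (1 - gammaFn n) = n / ((n / 2 : ℕ) * ((n + 1) / 2 : ℕ)) := by
        rw [gammaFn, ← hkl]
        field_simp
        ring
    _ ≤ n / (a * (n - a)) :=
        div_le_div_of_nonneg_left (Nat.cast_nonneg n) (by nlinarith)
          (mul_sub_le_div_two_mul_succ_div_two a n)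
    _ = 1 / a + 1 / (n - a) := by
        have : (n : ℝ) - a ≠ 0 := by linarith
        field_simp
        ring
    _ ≤ 1 / a + 1 / b := by gcongr

lemma sq_sum_le_card_support_mul_sum_sq {X : Type*} [Fintype X] (f : X → ℝ) :
    (∑ x, f x) ^ 2 ≤ #{x | f x ≠ 0} * ∑ x, f x ^ 2 := by
  rw [← sum_filter_ne_zero]
  exact sq_sum_le_card_mul_sum_sq.trans (mul_le_mul_of_nonneg_left
    (sum_le_sum_of_subset_of_nonneg (subset_univ _) fun _ _ _ => sq_nonneg _) (by positivity))

lemma sum_negPart_eq_sum_posPart {X : Type*} [Fintype X] {η : X → ℝ} (hη : ∑ x, η x = 0) :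
    ∑ x, (η x)⁻ = ∑ x, (η x)⁺ := by
  have h : ∑ x, ((η x)⁺ - (η x)⁻) = 0 := by
    simp_rw [posPart_sub_negPart]
    exact hη
  rw [sum_sub_distrib, sub_eq_zero] at h
  exact h.symm

lemma two_mul_one_sub_gammaFn_mul_sq_le {X : Type*} [Fintype X] {η : X → ℝ}
    (hη : ∑ x, η x = 0) :
    2 * (1 - gammaFn (Fintype.card X)) * (∑ x, (η x)⁺) ^ 2 ≤
      ∑ x, ((η x)⁺ ^ 2 + (η x)⁻ ^ 2) := by
  set M := ∑ x, (η x)⁺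
  have hpos := sq_sum_le_card_support_mul_sum_sq fun x => (η x)⁺
  have hneg := sq_sum_le_card_support_mul_sum_sq fun x => (η x)⁻
  rw [sum_negPart_eq_sum_posPart hη] at hneg
  rw [sum_add_distrib]
  rcases eq_or_ne M 0 with hM | hM
  · rw [hM, zero_pow two_ne_zero, mul_zero]
    positivity
  set a := #{x | (η x)⁺ ≠ 0}
  set b := #{x | (η x)⁻ ≠ 0}
  have hM2 : 0 < M ^ 2 := by positivity
  have ha : 0 < a := by
    by_contra! h
    simp only [nonpos_iff_eq_zero.1 h, Nat.cast_zero, zero_mul] at hpos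
    linarith
  have hb : 0 < b := by
    by_contra! h
    simp only [nonpos_iff_eq_zero.1 h, Nat.cast_zero, zero_mul] at hneg
    linarith
  have hab : a + b ≤ Fintype.card X := by
    classical
    rw [← card_union_of_disjoint]
    · exact card_le_univ _
    · refine disjoint_filter.2 fun x _ hx => ?_
      simp only [ne_eq, posPart_eq_zero, not_le, negPart_eq_zero] at hx ⊢
      exact not_lt.2 hx.le
  have ha' : (0 : ℝ) < a := by exact_mod_cast ha
  have hb' : (0 : ℝ) < b := by exact_mod_cast hb
  calc 2 * (1 - gammaFn (Fintype.card X)) * M ^ 2 ≤ (1 / a + 1 / b) * M ^ 2 :=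
        mul_le_mul_of_nonneg_right (two_mul_one_sub_gammaFn_le ha hb hab) hM2.le
    _ = M ^ 2 / a + M ^ 2 / b := by ring
    _ ≤ _ := add_le_add ((div_le_iff₀' ha').2 hpos) ((div_le_iff₀' hb').2 hneg)

lemma sum_sum_sq_sub_mul {X : Type*} [Fintype X] (T η : X → ℝ) (hη : ∑ x, η x = 0) :
    ∑ x, ∑ y, (T x - T y) ^ 2 * (η x * η y) = -2 * (∑ x, T x * η x) ^ 2 := by
  have expand : ∀ x y, (T x - T y) ^ 2 * (η x * η y) =
      T x ^ 2 * η x * η y + η x * (T y ^ 2 * η y) - 2 * (T x * η x * (T y * η y)) := by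
    intros
    ring
  simp_rw [expand, sum_sub_distrib, sum_add_distrib, ← mul_sum, ← sum_mul, hη]
  ring

lemma rpow_mul_sub_le {d D p P Q : ℝ} (hd : 1 ≤ d) (hdD : d ≤ D) (hp : 1 ≤ p)
    (hP : 0 ≤ P) (hQ : 0 ≤ Q) :
    d ^ p * (P - Q) ≤ d * (P - Q) + (D ^ (p - 1) - 1) * (d * P) := by
  have hsplit : d ^ p = d ^ (p - 1) * d := by
    rw [← Real.rpow_add_one (by positivity), sub_add_cancel]
  have h1 : 1 ≤ d ^ (p - 1) := Real.one_le_rpow hd (by linarith)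
  have h2 : d ^ (p - 1) ≤ D ^ (p - 1) := Real.rpow_le_rpow (by positivity) hdD (by linarith)
  have hdP : 0 ≤ d * P := by positivity
  have hdQ : 0 ≤ d * Q := by positivity
  rw [hsplit]
  nlinarith [mul_le_mul_of_nonneg_right h2 hdP, mul_le_mul_of_nonneg_right h1 hdQ]

lemma sum_sum_dist_mul_le {X : Type*} [Fintype X] [PseudoMetricSpace X] {D : ℝ}
    (hD : ∀ x y : X, dist x y ≤ D) {P : X → X → ℝ} (hP : ∀ x y, 0 ≤ P x y) :
    ∑ x, ∑ y, dist x y * P x y ≤ D * (∑ x, ∑ y, P x y - ∑ x, P x x) := by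
  classical
  have hpoint : ∀ x y, dist x y * P x y ≤ D * (P x y - if x = y then P x x else 0) := by
    intro x y
    by_cases h : x = y
    · subst h
      simp
    · rw [if_neg h, sub_zero]
      exact mul_le_mul_of_nonneg_right (hD x y) (hP x y)
  refine (sum_le_sum fun x _ => sum_le_sum fun y _ => hpoint x y).trans_eq ?_
  simp_rw [← mul_sum, sum_sub_distrib, sum_ite_eq, if_pos (mem_univ _)]

lemma hasNegType_of_forall_sum_sum_le {X : Type*} [Fintype X] [MetricSpace X] {p : ℝ}
    (h : ∀ η : X → ℝ, ∑ x, η x = 0 → ∑ x, ∑ y, negKer p x y * (η x * η y) ≤ 0) :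
    HasNegType X p := by
  classical
  intro k _ x _ η hη
  set ξ : X → ℝ := fun v => ∑ i, if x i = v then η i else 0
  have hpush : ∀ g : X → ℝ, ∑ v, g v * ξ v = ∑ i, g (x i) * η i := fun g => by
    simp_rw [ξ, mul_sum, mul_ite, mul_zero]
    rw [sum_comm]
    simp
  have hξ : ∑ v, ξ v = 0 := by simpa [hη] using hpush 1
  calc ∑ i, ∑ j, negKer p (x i) (x j) * η i * η j
      = ∑ u, (∑ v, negKer p u v * ξ v) * ξ u := by
        rw [hpush]
        refine sum_congr rfl fun i _ => ?_
        rw [hpush, sum_mul]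
        exact sum_congr rfl fun j _ => by ring
    _ = ∑ u, ∑ v, negKer p u v * (ξ u * ξ v) := by
        refine sum_congr rfl fun u _ => ?_
        rw [sum_mul]
        exact sum_congr rfl fun v _ => by ring
    _ ≤ 0 := h ξ hξ

lemma le_two_of_hasNegType {X : Type*} [MetricSpace X] {p t : ℝ} {x y z : X} (ht : 0 < t)
    (hxy : dist x y = t) (hyz : dist y z = t) (hxz : dist x z = 2 * t) (h : HasNegType X p) :
    p ≤ 2 := by
  have hxy' : x ≠ y := fun e => by rw [e, dist_self] at hxy; linarith
  have hyz' : y ≠ z := fun e => by rw [e, dist_self] at hyz; linarith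
  have hxz' : x ≠ z := fun e => by rw [e, dist_self] at hxz; linarith
  have hinj : Function.Injective ![x, y, z] := by
    intro i j hij
    fin_cases i <;> fin_cases j <;> simp_all [eq_comm]
  have hform := h 3 (by norm_num) ![x, y, z] hinj ![1, -2, 1]
    (by simp [Fin.sum_univ_three]; norm_num)
  simp [Fin.sum_univ_three, negKer, hxy', hyz', hxz', hxy'.symm, hyz'.symm, hxz'.symm,
    dist_comm y x, dist_comm z y, dist_comm z x, hxy, hyz, hxz,
    Real.mul_rpow zero_le_two ht.le] at hform
  have htp : 0 < t ^ p := Real.rpow_pos_of_pos ht p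
  have h4 : (2 : ℝ) ^ p ≤ 2 ^ (2 : ℝ) := by
    rw [show (2 : ℝ) ^ (2 : ℝ) = 4 by norm_num]
    nlinarith
  exact (Real.rpow_le_rpow_left_iff one_lt_two).1 h4

theorem hasNegType_of_one_negType_gap {X : Type*} [Fintype X] [MetricSpace X] [Nontrivial X]
    {D p : ℝ} (hsep : ∀ x y : X, x ≠ y → 1 ≤ dist x y) (hD : ∀ x y : X, dist x y ≤ D)
    (hp : 1 ≤ p)
    (hgap : ∀ η : X → ℝ, ∑ x, η x = 0 →
      ((Fintype.card X : ℝ) - 1) * ∑ x, ∑ y, dist x y * (η x * η y) ≤ -2 * (∑ x, (η x)⁺) ^ 2)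
    (hpD : (D ^ (p - 1) - 1) * D * ((Fintype.card X - 1) * gammaFn (Fintype.card X)) ≤ 1) :
    HasNegType X p := by
  refine hasNegType_of_forall_sum_sum_le fun η hη => ?_
  obtain ⟨x₀, y₀, hne⟩ := exists_pair_ne X
  have hD1 : 1 ≤ D := (hsep x₀ y₀ hne).trans (hD x₀ y₀)
  have hn : (0 : ℝ) < Fintype.card X - 1 := by
    rw [sub_pos]
    exact_mod_cast Fintype.one_lt_card
  set c := D ^ (p - 1) - 1
  have hc : 0 ≤ c := sub_nonneg.2 (Real.one_le_rpow hD1 (by linarith))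
  set M := ∑ x, (η x)⁺
  -- Raising `d ≥ 1` to the power `p ≥ 1` can only hurt on the positive part `P x y` of `ηₓ η_y`.
  set P : X → X → ℝ := fun x y => (η x)⁺ * (η y)⁺ + (η x)⁻ * (η y)⁻
  have hP : ∀ x y, 0 ≤ P x y := fun x y => by positivity
  have hpoint : ∀ x y, negKer p x y * (η x * η y) ≤
      dist x y * (η x * η y) + c * (dist x y * P x y) := by
    intro x y
    by_cases h : x = y
    · subst h
      simp [negKer]
    have hsplit : η x * η y = P x y - ((η x)⁺ * (η y)⁻ + (η x)⁻ * (η y)⁺) := by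
      conv_lhs => rw [← posPart_sub_negPart (η x), ← posPart_sub_negPart (η y)]
      ring
    rw [negKer, if_neg h, hsplit]
    exact rpow_mul_sub_le (hsep x y h) (hD x y) hp (hP x y) (by positivity)
  have hsumP : ∑ x, ∑ y, P x y = 2 * M ^ 2 := by
    simp_rw [P, sum_add_distrib, ← sum_mul_sum, sum_negPart_eq_sum_posPart hη]
    ring
  have hquad : ∑ x, ∑ y, negKer p x y * (η x * η y) ≤ ∑ x, ∑ y, dist x y * (η x * η y) +
      c * (D * (2 * M ^ 2 - ∑ x, ((η x)⁺ ^ 2 + (η x)⁻ ^ 2))) := by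
    calc ∑ x, ∑ y, negKer p x y * (η x * η y)
        ≤ ∑ x, ∑ y, (dist x y * (η x * η y) + c * (dist x y * P x y)) :=
          sum_le_sum fun x _ => sum_le_sum fun y _ => hpoint x y
      _ = ∑ x, ∑ y, dist x y * (η x * η y) + c * ∑ x, ∑ y, dist x y * P x y := by
          simp_rw [sum_add_distrib, mul_sum]
      _ ≤ _ := by
          gcongr
          simpa only [hsumP, P, sq] using sum_sum_dist_mul_le hD hP
  have hsq := two_mul_one_sub_gammaFn_mul_sq_le hη
  have hcD : 0 ≤ (Fintype.card X - 1) * (c * D) := by positivity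
  have hscaled : (Fintype.card X - 1) * ∑ x, ∑ y, negKer p x y * (η x * η y) ≤ 0 := by
    linarith [mul_le_mul_of_nonneg_left hquad hn.le, hgap η hη,
      mul_le_mul_of_nonneg_right hpD (by positivity : (0 : ℝ) ≤ 2 * M ^ 2),
      mul_nonneg hcD (sub_nonneg.2 hsq)]
  exact nonpos_of_mul_nonpos_right hscaled hn

theorem hasNegType_one_add_logb_of_one_negType_gap {X : Type*} [Fintype X] [MetricSpace X]
    [Nontrivial X] {D : ℝ} (hsep : ∀ x y : X, x ≠ y → 1 ≤ dist x y)
    (hD : ∀ x y : X, dist x y ≤ D) (hD1 : 1 < D) (hγ : 0 < gammaFn (Fintype.card X))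
    (hgap : ∀ η : X → ℝ, ∑ x, η x = 0 →
      ((Fintype.card X : ℝ) - 1) * ∑ x, ∑ y, dist x y * (η x * η y) ≤ -2 * (∑ x, (η x)⁺) ^ 2) :
    HasNegType X
      (1 + Real.logb D (1 + 1 / (D * ((Fintype.card X : ℝ) - 1) * gammaFn (Fintype.card X)))) := by
  have hn : (0 : ℝ) < Fintype.card X - 1 := by
    rw [sub_pos]
    exact_mod_cast Fintype.one_lt_card
  have hε : 0 < 1 / (D * ((Fintype.card X : ℝ) - 1) * gammaFn (Fintype.card X)) := by
    have : 0 < D := by linarith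
    positivity
  refine hasNegType_of_one_negType_gap hsep hD
    (le_add_of_nonneg_right (Real.logb_nonneg hD1 (by linarith))) hgap ?_
  rw [add_sub_cancel_left, Real.rpow_logb (by linarith) hD1.ne' (by linarith), add_sub_cancel_left]
  have : D * ((Fintype.card X : ℝ) - 1) * gammaFn (Fintype.card X) ≠ 0 := by positivity
  exact le_of_eq (by field_simp)

namespace SimpleGraph.IsTree

variable {V : Type*} {G : SimpleGraph V}

section rooted

variable (hG : G.IsTree)

noncomputable def path (u v : V) : G.Walk u v :=
  (hG.existsUnique_path u v).exists.choose

lemma isPath_path (u v : V) : (hG.path u v).IsPath :=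
  (hG.existsUnique_path u v).exists.choose_spec

lemma eq_path {u v : V} {p : G.Walk u v} (hp : p.IsPath) : p = hG.path u v :=
  (hG.existsUnique_path u v).unique hp (hG.isPath_path u v)

lemma length_path (u v : V) : (hG.path u v).length = G.dist u v := by
  obtain ⟨p, hp, hlen⟩ := hG.connected.exists_path_of_dist u v
  rw [← hG.eq_path hp, hlen]

lemma path_self (u : V) : hG.path u u = .nil :=
  (hG.eq_path .nil).symm

variable (r : V)

noncomputable def parent (u : V) : V :=
  (hG.path r u).penultimate

lemma parent_root : hG.parent r r = r := by
  simp [parent, path_self]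

variable {hG r}

lemma path_eq_concat_of_adj {u v : V} (h : G.Adj u v) (hu : u ∈ (hG.path r v).support) :
    hG.path r v = (hG.path r u).concat h :=
  hG.isAcyclic.path_concat (hG.isPath_path r u) (hG.isPath_path r v) h hu

lemma path_eq_concat_parent {u : V} (hu : u ≠ r) :
    ∃ h : G.Adj (hG.parent r u) u, hG.path r u = (hG.path r (hG.parent r u)).concat h := by
  have hnil : ¬(hG.path r u).Nil := Walk.not_nil_of_ne hu.symm
  refine ⟨(hG.path r u).adj_penultimate hnil, ?_⟩
  conv_lhs => rw [← Walk.concat_dropLast ((hG.path r u).adj_penultimate hnil)]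
  rw [hG.eq_path (hG.isPath_path r u).dropLast]
  rfl

section ancestors

variable [DecidableEq V]

lemma dist_add_dist_of_mem_support_path {u x : V} (hx : x ∈ (hG.path r u).support) :
    G.dist r x + G.dist x u = G.dist r u := by
  have htake := hG.eq_path ((hG.isPath_path r u).takeUntil hx)
  have hdrop := hG.eq_path ((hG.isPath_path r u).dropUntil hx)
  rw [← hG.length_path, ← hG.length_path, ← hG.length_path, ← htake, ← hdrop,
    ← Walk.length_append, Walk.take_spec]

lemma getVert_path_dist {u x : V} (hx : x ∈ (hG.path r u).support) :
    (hG.path r u).getVert (G.dist r x) = x := by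
  have htake := hG.eq_path ((hG.isPath_path r u).takeUntil hx)
  rw [← hG.length_path, ← htake, Walk.getVert_length_takeUntil]

variable (hG r)

noncomputable def ancestors (u : V) : Finset V :=
  (hG.path r u).support.toFinset

variable {hG r}

lemma mem_ancestors {u x : V} : x ∈ hG.ancestors r u ↔ x ∈ (hG.path r u).support :=
  List.mem_toFinset

variable (hG r)

lemma root_mem_ancestors (u : V) : r ∈ hG.ancestors r u :=
  mem_ancestors.2 (hG.path r u).start_mem_support

lemma card_ancestors (u : V) : #(hG.ancestors r u) = G.dist r u + 1 := by
  rw [ancestors, List.toFinset_card_of_nodup (hG.isPath_path r u).support_nodup,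
    Walk.length_support, length_path]

lemma ancestors_root : hG.ancestors r r = {r} := by
  simp [ancestors, path_self]

variable {hG r}

lemma ancestors_eq_insert_of_path_eq_concat {u v : V} {h : G.Adj u v}
    (he : hG.path r v = (hG.path r u).concat h) :
    hG.ancestors r v = insert v (hG.ancestors r u) ∧ v ∉ hG.ancestors r u := by
  have hpath := hG.isPath_path r v
  rw [he, Walk.concat_isPath_iff] at hpath
  refine ⟨?_, fun hv => hpath.2 (mem_ancestors.1 hv)⟩
  ext x
  simp [mem_ancestors, he, Walk.support_concat, or_comm]

lemma card_symmDiff_ancestors_le_one_of_adj {u v : V} (h : G.Adj u v) :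
    #(hG.ancestors r u ∆ hG.ancestors r v) ≤ 1 := by
  have key : ∀ {a b : V} (h : G.Adj a b), a ∈ (hG.path r b).support →
      #(hG.ancestors r a ∆ hG.ancestors r b) ≤ 1 := by
    intro a b h ha
    obtain ⟨he, -⟩ := ancestors_eq_insert_of_path_eq_concat (path_eq_concat_of_adj h ha)
    have hsub : hG.ancestors r a ⊆ hG.ancestors r b := he ▸ subset_insert _ _
    rw [symmDiff_of_le hsub, card_sdiff_of_subset hsub, he]
    exact (Nat.sub_le_sub_right (card_insert_le _ _) _).trans (by omega)
  by_cases hu : u ∈ (hG.path r v).support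
  · exact key h hu
  · rw [symmDiff_comm]
    exact key h.symm (hG.isAcyclic.mem_support_of_ne_mem_support_of_adj_of_isPath
      (hG.isPath_path r u) (hG.isPath_path r v) h hu)

lemma card_symmDiff_ancestors_le_dist (u v : V) :
    #(hG.ancestors r u ∆ hG.ancestors r v) ≤ G.dist u v := by
  obtain ⟨p, hp⟩ := hG.connected.exists_walk_length_eq_dist u v
  rw [← hp]
  clear hp
  induction p with
  | nil => simp
  | @cons a c b h p ih =>
    calc #(hG.ancestors r a ∆ hG.ancestors r b)
        ≤ #(hG.ancestors r a ∆ hG.ancestors r c ∪ hG.ancestors r c ∆ hG.ancestors r b) :=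
          card_le_card (symmDiff_triangle _ _ _)
      _ ≤ 1 + p.length :=
          (card_union_le _ _).trans (add_le_add (card_symmDiff_ancestors_le_one_of_adj h) ih)
      _ = (Walk.cons h p).length := by rw [Walk.length_cons, add_comm]

lemma card_inter_ancestors_le (u v : V) :
    #(hG.ancestors r u ∩ hG.ancestors r v) ≤
      (G.dist r u + G.dist r v - G.dist u v) / 2 + 1 := by
  rw [← card_range ((G.dist r u + G.dist r v - G.dist u v) / 2 + 1)]
  refine card_le_card_of_injOn (G.dist r) (fun x hx => ?_) (fun x hx y hy hxy => ?_)
  · simp only [coe_inter, Set.mem_inter_iff, mem_coe, mem_ancestors] at hx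
    have hxu := dist_add_dist_of_mem_support_path hx.1
    have hxv := dist_add_dist_of_mem_support_path hx.2
    have htri := hG.connected.dist_triangle (u := u) (v := x) (w := v)
    rw [G.dist_comm (u := u) (v := x)] at htri
    simp only [coe_range, Set.mem_Iio]
    omega
  · simp only [coe_inter, Set.mem_inter_iff, mem_coe, mem_ancestors] at hx hy
    rw [← getVert_path_dist hx.1, ← getVert_path_dist hy.1, hxy]

lemma dist_le_card_symmDiff_ancestors (u v : V) :
    G.dist u v ≤ #(hG.ancestors r u ∆ hG.ancestors r v) := by
  have hcard := card_union_add_card_inter (hG.ancestors r u) (hG.ancestors r v)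
  rw [card_ancestors, card_ancestors] at hcard
  have htri := hG.connected.dist_triangle (u := u) (v := r) (w := v)
  rw [G.dist_comm (u := u) (v := r)] at htri
  have := card_inter_ancestors_le (hG := hG) (r := r) u v
  rw [symmDiff_eq_sup_sdiff_inf, sup_eq_union, inf_eq_inter,
    card_sdiff_of_subset inter_subset_union]
  omega

lemma dist_eq_card_symmDiff_ancestors (u v : V) :
    G.dist u v = #(hG.ancestors r u ∆ hG.ancestors r v) :=
  (dist_le_card_symmDiff_ancestors u v).antisymm (card_symmDiff_ancestors_le_dist u v)

lemma sum_ancestors_sub_parent {M : Type*} [AddCommGroup M] (f : V → M) (u : V) :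
    ∑ x ∈ hG.ancestors r u, (f x - f (hG.parent r x)) = f u - f r := by
  induction hn : G.dist r u generalizing u with
  | zero =>
    obtain rfl : r = u := hG.connected.dist_eq_zero_iff.1 hn
    simp [ancestors_root, parent_root]
  | succ n ih =>
    have hu : u ≠ r := by
      rintro rfl
      simp at hn
    obtain ⟨h, he⟩ := path_eq_concat_parent hu
    obtain ⟨hanc, hnot⟩ := ancestors_eq_insert_of_path_eq_concat he
    have hdist : G.dist r (hG.parent r u) = n := by
      have := card_ancestors hG r u
      rw [hanc, card_insert_of_notMem hnot, card_ancestors] at this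
      omega
    rw [hanc, sum_insert hnot, ih _ hdist]
    abel

variable [Fintype V]

variable (hG r) in
noncomputable def subtreeSum (η : V → ℝ) (x : V) : ℝ :=
  ∑ u, if x ∈ hG.ancestors r u then η u else 0

variable {η : V → ℝ}

lemma subtreeSum_root (hη : ∑ u, η u = 0) : hG.subtreeSum r η r = 0 := by
  simp [subtreeSum, root_mem_ancestors, hη]

lemma sum_mul_eq_sum_mul_subtreeSum (hη : ∑ u, η u = 0) (f : V → ℝ) :
    ∑ u, η u * f u = ∑ x, (f x - f (hG.parent r x)) * hG.subtreeSum r η x := by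
  calc ∑ u, η u * f u = ∑ u, η u * (f u - f r) := by
        simp_rw [mul_sub, sum_sub_distrib, ← sum_mul, hη, zero_mul, sub_zero]
    _ = ∑ u, ∑ x, if x ∈ hG.ancestors r u then η u * (f x - f (hG.parent r x)) else 0 := by
        simp_rw [sum_ite_mem, univ_inter, ← mul_sum, sum_ancestors_sub_parent]
    _ = _ := by
        rw [sum_comm]
        simp_rw [subtreeSum, mul_sum, mul_ite, mul_zero, mul_comm]

lemma sum_sum_dist_mul_eq (hη : ∑ u, η u = 0) :
    ∑ u, ∑ v, (G.dist u v : ℝ) * (η u * η v) = -2 * ∑ x, hG.subtreeSum r η x ^ 2 := by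
  set T : V → V → ℝ := fun x u => if x ∈ hG.ancestors r u then 1 else 0
  have hdist : ∀ u v, (G.dist u v : ℝ) = ∑ x, (T x u - T x v) ^ 2 := by
    intro u v
    have hT : ∀ x, (T x u - T x v) ^ 2 =
        if x ∈ hG.ancestors r u ∆ hG.ancestors r v then 1 else 0 := fun x => by
      by_cases hu : x ∈ hG.ancestors r u <;> by_cases hv : x ∈ hG.ancestors r v <;>
        simp [T, mem_symmDiff, hu, hv]
    simp_rw [hT, sum_ite_mem, univ_inter, sum_const, nsmul_one,
      dist_eq_card_symmDiff_ancestors (hG := hG) (r := r)]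
  have hsub : ∀ x, hG.subtreeSum r η x = ∑ u, T x u * η u := fun x => by
    simp [subtreeSum, T, ite_mul]
  simp_rw [hdist, sum_mul, hsub]
  calc ∑ u, ∑ v, ∑ x, (T x u - T x v) ^ 2 * (η u * η v)
      = ∑ x, ∑ u, ∑ v, (T x u - T x v) ^ 2 * (η u * η v) :=
        (sum_congr rfl fun u _ => sum_comm).trans sum_comm
    _ = -2 * ∑ x, (∑ u, T x u * η u) ^ 2 := by
        rw [mul_sum]
        exact sum_congr rfl fun x _ => sum_sum_sq_sub_mul _ _ hη

lemma sq_sum_mul_le_mul_sum_subtreeSum_sq (hη : ∑ u, η u = 0) {f : V → ℝ}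
    (hf : ∀ x, f x ∈ Set.Icc 0 1) :
    (∑ u, η u * f u) ^ 2 ≤ (Fintype.card V - 1) * ∑ x, hG.subtreeSum r η x ^ 2 := by
  set g : V → ℝ := fun x => f x - f (hG.parent r x)
  have hg : ∀ x, g x ^ 2 ≤ 1 := fun x => by
    obtain ⟨h0, h1⟩ := hf x
    obtain ⟨h0', h1'⟩ := hf (hG.parent r x)
    simp only [g, sq_le_one_iff_abs_le_one, abs_le]
    constructor <;> linarith
  have : Nonempty V := ⟨r⟩
  have hsum_g : ∑ x ∈ univ.erase r, g x ^ 2 ≤ Fintype.card V - 1 := by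
    refine (sum_le_sum fun x _ => hg x).trans_eq ?_
    rw [sum_const, card_erase_of_mem (mem_univ r), card_univ, nsmul_one,
      Nat.cast_pred Fintype.card_pos]
  calc (∑ u, η u * f u) ^ 2 = (∑ x ∈ univ.erase r, g x * hG.subtreeSum r η x) ^ 2 := by
        rw [sum_mul_eq_sum_mul_subtreeSum hη, sum_erase _ (by rw [subtreeSum_root hη, mul_zero])]
    _ ≤ (∑ x ∈ univ.erase r, g x ^ 2) * ∑ x ∈ univ.erase r, hG.subtreeSum r η x ^ 2 :=
        sum_mul_sq_le_sq_mul_sq _ _ _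
    _ ≤ (Fintype.card V - 1) * ∑ x, hG.subtreeSum r η x ^ 2 :=
        mul_le_mul hsum_g (sum_le_sum_of_subset_of_nonneg (erase_subset _ _)
          fun _ _ _ => sq_nonneg _) (sum_nonneg fun _ _ => sq_nonneg _)
          (hsum_g.trans' (sum_nonneg fun _ _ => sq_nonneg _))

end ancestors

end rooted

variable [Fintype V]

lemma card_sub_one_mul_sum_sum_dist_mul_le (hG : G.IsTree) {η : V → ℝ} (hη : ∑ u, η u = 0) :
    ((Fintype.card V : ℝ) - 1) * ∑ u, ∑ v, (G.dist u v : ℝ) * (η u * η v) ≤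
      -2 * (∑ u, (η u)⁺) ^ 2 := by
  classical
  obtain ⟨r⟩ := hG.connected.nonempty
  set f : V → ℝ := fun u => if 0 ≤ η u then 1 else 0
  have hf : ∀ x, f x ∈ Set.Icc 0 1 := fun x => by
    simp only [f]
    split_ifs <;> norm_num
  have hηf : ∑ u, η u * f u = ∑ u, (η u)⁺ :=
    sum_congr rfl fun u _ => by simp [f, posPart_eq_ite]
  have hcs := sq_sum_mul_le_mul_sum_subtreeSum_sq (hG := hG) (r := r) hη hf
  rw [sum_sum_dist_mul_eq (hG := hG) (r := r) hη, ← hηf]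
  linarith

lemma exists_dist_eq_one_dist_eq_one_dist_eq_two (hG : G.IsTree) (hV : 2 < Fintype.card V) :
    ∃ x y z : V, G.dist x y = 1 ∧ G.dist y z = 1 ∧ G.dist x z = 2 := by
  classical
  obtain ⟨a, b, c, hab, hac, hbc⟩ := Fintype.two_lt_card_iff.1 hV
  obtain ⟨v, w, hvw, hnadj⟩ : ∃ v w : V, v ≠ w ∧ ¬G.Adj v w := by
    by_contra! H
    exact hG.isAcyclic.cliqueFree le_rfl {a, b, c}
      (is3Clique_triple_iff.2 ⟨H a b hab, H a c hac, H b c hbc⟩)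
  obtain ⟨p, -, hp⟩ := hG.connected.exists_path_of_dist v w
  obtain ⟨x, y, z, hxy, hyz, hxz, hne⟩ :=
    p.exists_adj_adj_not_adj_ne hp (hG.connected.one_lt_dist_of_ne_of_not_adj hvw hnadj)
  refine ⟨x, y, z, dist_eq_one_iff_adj.2 hxy, dist_eq_one_iff_adj.2 hyz, ?_⟩
  have hle := dist_le (Walk.cons hxy (Walk.cons hyz Walk.nil))
  have hlt := hG.connected.one_lt_dist_of_ne_of_not_adj hne hxz
  simp only [Walk.length_cons, Walk.length_nil] at hle
  omega

end SimpleGraph.IsTree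

/-- Lower bound on the maximal `p`-negative type of a finite metric tree with
the ordinary path metric: `℘_T ≥ 1 + ln(1 + 1/(𝔇(n-1)γ(n)))/ln 𝔇`. -/
theorem tree_maximal_negType_lower_bound {V : Type*} [Fintype V] [MetricSpace V]
    (G : SimpleGraph V) (htree : G.IsTree)
    (hdist : ∀ u v : V, dist u v = (G.dist u v : ℝ))
    (hcard : 3 ≤ Fintype.card V)
    (𝔇 : ℝ) (h𝔇 : 𝔇 = Metric.diam (Set.univ : Set V)) :
    1 + Real.log (1 + 1 / (𝔇 * ((Fintype.card V : ℝ) - 1) * gammaFn (Fintype.card V))) /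
        Real.log 𝔇 ≤
      sSup {p : ℝ | 0 ≤ p ∧ HasNegType V p} := by
  obtain ⟨x, y, z, hxy, hyz, hxz⟩ := htree.exists_dist_eq_one_dist_eq_one_dist_eq_two hcard
  have hsep : ∀ u v : V, u ≠ v → 1 ≤ dist u v := fun u v h => by
    rw [hdist]
    exact_mod_cast htree.connected.pos_dist_of_ne h
  have hdiam : ∀ u v : V, dist u v ≤ 𝔇 := fun u v =>
    h𝔇 ▸ Metric.dist_le_diam_of_mem Set.finite_univ.isBounded trivial trivial
  have h𝔇2 : 2 ≤ 𝔇 := by simpa [hdist, hxz] using hdiam x z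
  have : Nontrivial V := ⟨⟨x, z, fun h => by simp [h] at hxz⟩⟩
  have hγ := gammaFn_pos hcard
  have hε : 0 ≤ 1 / (𝔇 * ((Fintype.card V : ℝ) - 1) * gammaFn (Fintype.card V)) := by
    have : (3 : ℝ) ≤ Fintype.card V := by exact_mod_cast hcard
    have : 0 < 𝔇 * ((Fintype.card V : ℝ) - 1) := by nlinarith
    positivity
  rw [Real.log_div_log]
  refine le_csSup ⟨2, fun q hq => le_two_of_hasNegType (x := x) (y := y) (z := z) one_pos
    ?_ ?_ ?_ hq.2⟩ ⟨?_, hasNegType_one_add_logb_of_one_negType_gap hsep hdiam (by linarith) hγ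
      fun η hη => by simpa only [hdist] using htree.card_sub_one_mul_sum_sum_dist_mul_le hη⟩
  · simp [hdist, hxy]
  · simp [hdist, hyz]
  · simp [hdist, hxz]
  · exact zero_le_one.trans
      (le_add_of_nonneg_right (Real.logb_nonneg (by linarith) (le_add_of_nonneg_right hε)))
end

section
/- Every finite tree endowed with the ordinary path metric has strict q-negative type for all q in some interval [1, 1+ζ) with ζ > 0; that is, if T is a finite tree with the ordinary path metric d, then there exists ζ > 0 such that (T,d) has strict q-negative type for every q ∈ [1, 1+ζ). -/
open scoped BigOperators

/-!
On a tree, strict `1`-negative type holds with a uniform margin: if `∑ η = 0` then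
`η ⬝ᵥ D *ᵥ η ≤ -c (∑ |η|)²`, where `D` is the distance matrix. Fix a root and let `ℓ` be a point of
the support of `η` farthest from it, `b` its neighbour towards the root; every other point of the
support is one step closer to `b` than to `ℓ`. Moving the mass of `η` at `ℓ` to `b` raises the form
by exactly `2 η(ℓ)²` and brings the support closer to the root, so induction gives the margin.
The kernel `d^q` depends continuously on `q` and the space is finite, so the margin survives for
`q` near `1`.
-/

open Finset Matrix Filter Topology

theorem Matrix.dotProduct_mulVec_le_of_abs_le {n : Type*} [Fintype n] {A : Matrix n n ℝ} {E : ℝ}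
    (hA : ∀ i j, |A i j| ≤ E) (η : n → ℝ) : η ⬝ᵥ A *ᵥ η ≤ E * (∑ i, |η i|) ^ 2 := by
  calc η ⬝ᵥ A *ᵥ η = ∑ i, ∑ j, η i * A i j * η j := by
        simp only [dotProduct, mulVec, mul_sum, mul_assoc]
    _ ≤ ∑ i, ∑ j, |η i| * E * |η j| := by
        refine sum_le_sum fun i _ => sum_le_sum fun j _ => ?_
        calc η i * A i j * η j ≤ |η i * A i j * η j| := le_abs_self _
          _ = |η i| * |A i j| * |η j| := by rw [abs_mul, abs_mul]
          _ ≤ |η i| * E * |η j| := by gcongr; exact hA i j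
    _ = E * (∑ i, |η i|) ^ 2 := by
        rw [sq, sum_mul_sum, mul_sum]
        exact sum_congr rfl fun i _ => by rw [mul_sum]; exact sum_congr rfl fun j _ => by ring

theorem Matrix.dotProduct_mulVec_add_of_transpose_eq {n : Type*} [Fintype n] {M : Matrix n n ℝ}
    (hM : Mᵀ = M) (η θ : n → ℝ) :
    (η + θ) ⬝ᵥ M *ᵥ (η + θ) = η ⬝ᵥ M *ᵥ η + 2 * (η ⬝ᵥ M *ᵥ θ) + θ ⬝ᵥ M *ᵥ θ := by
  have : θ ⬝ᵥ M *ᵥ η = η ⬝ᵥ M *ᵥ θ := by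
    rw [dotProduct_mulVec, dotProduct_comm, ← mulVec_transpose, hM]
  simp only [mulVec_add, dotProduct_add, add_dotProduct, this]
  ring

theorem eq_zero_of_sum_eq_zero_of_forall_ne {V : Type*} [Fintype V] {η : V → ℝ} {r : V}
    (h : ∀ v ≠ r, η v = 0) (hsum : ∑ v, η v = 0) : η = 0 := by
  have hr : η r = 0 := by rwa [sum_eq_single r (fun v _ hv => h v hv) (by simp)] at hsum
  ext v
  by_cases hv : v = r
  · rw [hv, hr]; rfl
  · exact h v hv

section Extend

variable {ι X : Type*} [Fintype ι] [Fintype X] {x : ι → X}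

theorem sum_extend_mul (hx : Function.Injective x) (η : ι → ℝ) (F : X → ℝ) :
    ∑ v, Function.extend x η 0 v * F v = ∑ i, η i * F (x i) := by
  classical
  rw [← sum_subset (subset_univ (univ.image x)), sum_image fun i _ j _ h => hx h]
  · simp [hx.extend_apply]
  · intro v _ hv
    rw [Function.extend_apply' _ _ _ (by simpa using hv), Pi.zero_apply, zero_mul]

theorem dotProduct_mulVec_extend (hx : Function.Injective x) (K : X → X → ℝ) (η : ι → ℝ) :
    Function.extend x η 0 ⬝ᵥ of K *ᵥ Function.extend x η 0 =
      ∑ i, ∑ j, K (x i) (x j) * η i * η j := by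
  have hrow : ∀ u, (of K *ᵥ Function.extend x η 0) u = ∑ j, η j * K u (x j) := fun u => by
    simp only [mulVec, dotProduct, of_apply, mul_comm (K u _), sum_extend_mul hx]
  rw [dotProduct, funext hrow, sum_extend_mul hx η fun u => ∑ j, η j * K u (x j)]
  simp only [mul_sum]
  exact sum_congr rfl fun i _ => sum_congr rfl fun j _ => by ring

end Extend

section NegType

variable {X : Type*} [MetricSpace X]

theorem continuous_negKer (x y : X) : Continuous fun p => negKer p x y := by
  by_cases h : x = y
  · simpa [negKer, h] using continuous_const
  · simpa [negKer, h] using Real.continuous_const_rpow (dist_ne_zero.2 h)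

variable [Fintype X]

theorem hasStrictNegType_of_dotProduct_mulVec_neg {p : ℝ}
    (h : ∀ η : X → ℝ, ∑ v, η v = 0 → η ≠ 0 → η ⬝ᵥ of (negKer p) *ᵥ η < 0) :
    HasStrictNegType X p := by
  have key : ∀ k (x : Fin k → X), Function.Injective x → ∀ η : Fin k → ℝ, ∑ i, η i = 0 →
      η ≠ 0 → ∑ i, ∑ j, negKer p (x i) (x j) * η i * η j < 0 := by
    intro k x hx η hsum hne
    rw [← dotProduct_mulVec_extend hx]
    refine h _ ?_ ?_
    · simpa [hsum] using sum_extend_mul hx η 1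
    · obtain ⟨i, hi⟩ := Function.ne_iff.1 hne
      exact Function.ne_iff.2 ⟨x i, by rwa [hx.extend_apply]⟩
  refine ⟨fun k _ x hx η hsum => ?_, fun k _ => key k⟩
  rcases eq_or_ne η 0 with rfl | hne
  · simp
  · exact (key k x hx η hsum hne).le

theorem eventually_hasStrictNegType {p c : ℝ} (hc : 0 < c)
    (h : ∀ η : X → ℝ, ∑ v, η v = 0 → η ⬝ᵥ of (negKer p) *ᵥ η ≤ -c * (∑ v, |η v|) ^ 2) :
    ∀ᶠ q in 𝓝 p, HasStrictNegType X q := by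
  have hclose : ∀ᶠ q in 𝓝 p, ∀ u v : X, |negKer q u v - negKer p u v| ≤ c / 2 := by
    refine eventually_all.2 fun u => eventually_all.2 fun v => ?_
    filter_upwards [Metric.tendsto_nhds.1 ((continuous_negKer u v).tendsto p) (c / 2)
      (by positivity)] with q hq
    exact (Real.dist_eq _ _ ▸ hq).le
  filter_upwards [hclose] with q hq
  refine hasStrictNegType_of_dotProduct_mulVec_neg fun η hsum hne => ?_
  obtain ⟨v, hv⟩ := Function.ne_iff.1 hne
  have hpos : 0 < ∑ v, |η v| :=
    (abs_pos.2 hv).trans_le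
      (single_le_sum (f := fun v => |η v|) (fun _ _ => abs_nonneg _) (mem_univ v))
  have hdiff := dotProduct_mulVec_le_of_abs_le (A := of (negKer q) - of (negKer p)) hq η
  rw [sub_mulVec, dotProduct_sub] at hdiff
  nlinarith [h η hsum, mul_pos hc (pow_pos hpos 2)]

end NegType

section PushMass

variable {V : Type*} [DecidableEq V]

def pushMass (η : V → ℝ) (ℓ b : V) : V → ℝ := η + (Pi.single b (η ℓ) - Pi.single ℓ (η ℓ))

theorem sum_abs_pi_single [Fintype V] (b : V) (a : ℝ) : ∑ v, |Pi.single b a v| = |a| := by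
  simp [Pi.single_apply, apply_ite]

theorem pushMass_eq_zero {S : Finset V} {η : V → ℝ} (hsupp : ∀ v ∉ S, η v = 0) {ℓ b v : V}
    (hv : v ∉ insert b (S.erase ℓ)) : pushMass η ℓ b v = 0 := by
  simp only [mem_insert, mem_erase, not_or, not_and_or, not_not] at hv
  obtain ⟨hvb, hv⟩ := hv
  by_cases hvℓ : v = ℓ
  · subst hvℓ; simp [pushMass, hvb]
  · simp [pushMass, hvb, hvℓ, hsupp v (hv.resolve_left hvℓ)]

variable [Fintype V]

theorem sum_pushMass (η : V → ℝ) (ℓ b : V) : ∑ v, pushMass η ℓ b v = ∑ v, η v := by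
  simp [pushMass, sum_add_distrib, sum_sub_distrib]

theorem sum_abs_le_sum_abs_pushMass (η : V → ℝ) (ℓ b : V) :
    ∑ v, |η v| ≤ ∑ v, |pushMass η ℓ b v| + 2 * |η ℓ| := by
  calc ∑ v, |η v| ≤ ∑ v, (|pushMass η ℓ b v| + |(Pi.single b (η ℓ) : V → ℝ) v| +
        |(Pi.single ℓ (η ℓ) : V → ℝ) v|) := by
        refine sum_le_sum fun v _ => ?_
        have : η v = pushMass η ℓ b v - (Pi.single b (η ℓ) : V → ℝ) v +
            (Pi.single ℓ (η ℓ) : V → ℝ) v := by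
          simp only [pushMass, Pi.add_apply, Pi.sub_apply]; ring
        rw [this]
        exact (abs_add_le _ _).trans (by gcongr; exact abs_sub _ _)
    _ = _ := by simp only [sum_add_distrib, sum_abs_pi_single]; ring

end PushMass

namespace SimpleGraph

variable {V : Type*} {G : SimpleGraph V}

theorem IsTree.length_eq_dist (hG : G.IsTree) {u v : V} {p : G.Walk u v} (hp : p.IsPath) :
    p.length = G.dist u v := by
  obtain ⟨q, hq, hql⟩ := hG.connected.exists_path_of_dist u v
  rw [(hG.existsUnique_path u v).unique hp hq, hql]

theorem IsTree.dist_eq_add_of_mem_support (hG : G.IsTree) {u v w : V} {p : G.Walk u v}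
    (hp : p.IsPath) (hw : w ∈ p.support) : G.dist u v = G.dist u w + G.dist w v := by
  classical
  rw [← hG.length_eq_dist hp, ← hG.length_eq_dist (hp.takeUntil hw),
    ← hG.length_eq_dist (hp.dropUntil hw), ← Walk.length_append, Walk.take_spec]

theorem IsTree.exists_gate (hG : G.IsTree) (r : V) {S : Finset V} (hS : ∃ x ∈ S, x ≠ r) :
    ∃ ℓ ∈ S, ∃ b, G.Adj ℓ b ∧ G.dist r ℓ = G.dist r b + 1 ∧
      ∀ x ∈ S, x ≠ ℓ → G.dist x ℓ = G.dist x b + 1 := by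
  classical
  obtain ⟨x₀, hx₀S, hx₀r⟩ := hS
  obtain ⟨ℓ, hℓS, hℓmax⟩ := S.exists_max_image (G.dist r) ⟨x₀, hx₀S⟩
  have hℓr : ℓ ≠ r := by
    rintro rfl
    have := hℓmax x₀ hx₀S
    have := hG.connected.pos_dist_of_ne hx₀r.symm
    simp only [dist_self] at *
    omega
  obtain ⟨p, hp, hpl⟩ := hG.connected.exists_path_of_dist ℓ r
  cases p with
  | nil => exact absurd rfl hℓr
  | @cons _ b _ hadj q =>
    rw [Walk.cons_isPath_iff] at hp
    refine ⟨ℓ, hℓS, b, hadj, ?_, fun x hxS hxℓ => ?_⟩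
    · rw [dist_comm, dist_comm (u := r), ← hpl, ← hG.length_eq_dist hp.1, Walk.length_cons]
    obtain ⟨w, hw, -⟩ := hG.connected.exists_path_of_dist x r
    by_cases hℓw : ℓ ∈ w.support
    · -- then `x` would be farther from `r` than `ℓ`
      have := hG.dist_eq_add_of_mem_support hw hℓw
      have := hℓmax x hxS
      have := hG.connected.pos_dist_of_ne hxℓ
      rw [dist_comm (u := r), dist_comm (u := r)] at *
      omega
    · obtain ⟨s, hs, -⟩ := hG.connected.exists_path_of_dist x ℓ
      have hℓt : ℓ ∉ (w.append q.reverse).bypass.support := fun h => by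
        have := Walk.support_bypass_subset_support _ h
        simp only [Walk.mem_support_append_iff, Walk.support_reverse, List.mem_reverse] at this
        exact this.elim hℓw hp.2
      have hbs := hG.isAcyclic.mem_support_of_ne_mem_support_of_adj_of_isPath hs
        (Walk.bypass_isPath _) hadj hℓt
      rw [hG.dist_eq_add_of_mem_support hs hbs, dist_eq_one_iff_adj.mpr hadj.symm]

noncomputable def distMatrix (G : SimpleGraph V) : Matrix V V ℝ :=
  Matrix.of fun u v => (G.dist u v : ℝ)

@[simp] theorem distMatrix_apply (u v : V) : G.distMatrix u v = G.dist u v := rfl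

theorem distMatrix_transpose : G.distMatrixᵀ = G.distMatrix := by
  ext u v; simp [dist_comm]

variable [Fintype V] [DecidableEq V]

theorem dotProduct_distMatrix_mulVec_pushMass {S : Finset V} {ℓ b : V} (hadj : G.Adj ℓ b)
    (hgate : ∀ x ∈ S, x ≠ ℓ → G.dist x ℓ = G.dist x b + 1) {η : V → ℝ}
    (hsupp : ∀ v ∉ S, η v = 0) (hsum : ∑ v, η v = 0) :
    pushMass η ℓ b ⬝ᵥ G.distMatrix *ᵥ pushMass η ℓ b =
      η ⬝ᵥ G.distMatrix *ᵥ η + 2 * η ℓ ^ 2 := by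
  set a := η ℓ
  have hcol : G.distMatrix *ᵥ (Pi.single b a - Pi.single ℓ a) =
      fun u => a * ((G.dist u b : ℝ) - G.dist u ℓ) := by
    ext u; simp [mulVec_sub]; ring
  have hcross : η ⬝ᵥ G.distMatrix *ᵥ (Pi.single b a - Pi.single ℓ a) = 2 * a ^ 2 := by
    have hterm : ∀ u, η u * (a * ((G.dist u b : ℝ) - G.dist u ℓ)) =
        a * (2 * (if u = ℓ then η u else 0) - η u) := by
      intro u
      by_cases huℓ : u = ℓ
      · rw [huℓ, if_pos rfl, dist_eq_one_iff_adj.mpr hadj, dist_self]; push_cast; ring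
      by_cases huS : u ∈ S
      · simp [huℓ, hgate u huS huℓ]; ring
      · simp [hsupp u huS]
    simp only [hcol, dotProduct, hterm, ← mul_sum, sum_sub_distrib, sum_ite_eq', mem_univ,
      if_true, hsum]
    ring
  have hself : (Pi.single b a - Pi.single ℓ a) ⬝ᵥ G.distMatrix *ᵥ
      (Pi.single b a - Pi.single ℓ a : V → ℝ) = -2 * a ^ 2 := by
    rw [hcol]
    simp [sub_dotProduct, dist_eq_one_iff_adj.mpr hadj, dist_eq_one_iff_adj.mpr hadj.symm]
    ring
  rw [pushMass, dotProduct_mulVec_add_of_transpose_eq distMatrix_transpose, hcross, hself]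
  ring

theorem IsTree.dotProduct_distMatrix_mulVec_le_of_sum_dist_le (hG : G.IsTree) (r : V) (N : ℕ)
    {S : Finset V} (hN : ∑ v ∈ S, G.dist r v ≤ N) {η : V → ℝ} (hsupp : ∀ v ∉ S, η v = 0)
    (hsum : ∑ v, η v = 0) :
    η ⬝ᵥ G.distMatrix *ᵥ η ≤ -(1 / 2) ^ (N + 1) * (∑ v, |η v|) ^ 2 := by
  induction N generalizing S η with
  | zero =>
    have hS : ∀ x ∈ S, x = r := fun x hx => by
      have := (single_le_sum (fun v _ => Nat.zero_le (G.dist r v)) hx).trans hN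
      exact ((hG.connected.dist_eq_zero_iff).mp (Nat.le_zero.mp this)).symm
    simp [eq_zero_of_sum_eq_zero_of_forall_ne (fun v hv => hsupp v fun hvS => hv (hS v hvS))
      hsum]
  | succ N ih =>
    by_cases hS : ∃ x ∈ S, x ≠ r
    swap
    · push Not at hS
      simp [eq_zero_of_sum_eq_zero_of_forall_ne (fun v hv => hsupp v fun hvS => hv (hS v hvS))
      hsum]
    obtain ⟨ℓ, hℓS, b, hadj, hbr, hgate⟩ := hG.exists_gate r hS
    have hN' : ∑ v ∈ insert b (S.erase ℓ), G.dist r v ≤ N := by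
      have hins : ∑ v ∈ insert b (S.erase ℓ), G.dist r v ≤
          G.dist r b + ∑ v ∈ S.erase ℓ, G.dist r v := by
        by_cases hb : b ∈ S.erase ℓ
        · rw [insert_eq_of_mem hb]; omega
        · rw [sum_insert hb]
      have := add_sum_erase S (G.dist r) hℓS
      omega
    have hη' := ih hN' (fun v hv => pushMass_eq_zero hsupp hv) (by rw [sum_pushMass, hsum])
    rw [dotProduct_distMatrix_mulVec_pushMass hadj hgate hsupp hsum] at hη'
    have habs := sum_abs_le_sum_abs_pushMass η ℓ b
    set c : ℝ := (1 / 2) ^ (N + 1)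
    set A := ∑ v, |pushMass η ℓ b v|
    have hc : 0 < c := by positivity
    have hc1 : c ≤ 1 / 2 := pow_le_of_le_one (by norm_num) (by norm_num) (by omega)
    have hA : 0 ≤ A := by positivity
    calc η ⬝ᵥ G.distMatrix *ᵥ η ≤ -c * A ^ 2 - 2 * η ℓ ^ 2 := by linarith
      _ ≤ -(c / 2) * (A + 2 * |η ℓ|) ^ 2 := by
        nlinarith [sq_abs (η ℓ), mul_nonneg hc.le (sq_nonneg (A - 2 * |η ℓ|))]
      _ ≤ -(1 / 2) ^ (N + 1 + 1) * (∑ v, |η v|) ^ 2 := by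
        have hpow : ((1 : ℝ) / 2) ^ (N + 1 + 1) = c / 2 := by rw [pow_succ]; ring
        rw [hpow, neg_mul, neg_mul, neg_le_neg_iff]
        gcongr

omit [DecidableEq V] in
theorem IsTree.exists_dotProduct_distMatrix_mulVec_le (hG : G.IsTree) :
    ∃ c > 0, ∀ η : V → ℝ, ∑ v, η v = 0 → η ⬝ᵥ G.distMatrix *ᵥ η ≤ -c * (∑ v, |η v|) ^ 2 := by
  classical
  obtain ⟨r⟩ := hG.connected.nonempty
  exact ⟨_, by positivity, fun η hsum =>
    hG.dotProduct_distMatrix_mulVec_le_of_sum_dist_le r _ (S := univ) le_rfl (by simp) hsum⟩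

end SimpleGraph

/-- Every finite tree with the ordinary path metric has strict `q`-negative
type for all `q` in some interval `[1, 1+ζ)` with `ζ > 0`. -/
theorem tree_strictNegType_interval {V : Type*} [Fintype V] [MetricSpace V]
    (G : SimpleGraph V) (htree : G.IsTree)
    (hdist : ∀ u v : V, dist u v = (G.dist u v : ℝ)) :
    ∃ ζ : ℝ, 0 < ζ ∧ ∀ q : ℝ, 1 ≤ q → q < 1 + ζ → HasStrictNegType V q := by
  obtain ⟨c, hc, hform⟩ := htree.exists_dotProduct_distMatrix_mulVec_le
  have hker : of (negKer 1 : V → V → ℝ) = G.distMatrix := by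
    ext u v
    by_cases h : u = v <;> simp [negKer, h, hdist]
  rw [← hker] at hform
  obtain ⟨ζ, hζ, hball⟩ := Metric.eventually_nhds_iff.1 (eventually_hasStrictNegType hc hform)
  refine ⟨ζ, hζ, fun q hq1 hq2 => hball ?_⟩
  rw [Real.dist_eq, abs_lt]
  constructor <;> linarith
end

section
/- Let X be a topological space and let Ψ : X × X → ℝ be a continuous kernel with Ψ(x,x) = 0 and Ψ(x,y) = Ψ(y,x) for all x,y ∈ X. Then Ψ is conditionally of negative type if and only if for every t ≥ 0 the kernel Φ = e^{−tΨ} is of positive type. -/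
open scoped BigOperators ComplexOrder

/-- A kernel of positive type on a topological space `X`. -/
def IsPosTypeKernel {X : Type*} [TopologicalSpace X] (Φ : X × X → ℂ) : Prop :=
  Continuous Φ ∧
  ∀ (k : ℕ) (x : Fin k → X) (η : Fin k → ℂ),
    0 ≤ ∑ i, ∑ j, Φ (x i, x j) * η i * (starRingEnd ℂ) (η j)

/-- A kernel conditionally of negative type on a topological space `X`. -/
def IsCondNegKernel {X : Type*} [TopologicalSpace X] (Ψ : X × X → ℝ) : Prop :=
  Continuous Ψ ∧ (∀ x, Ψ (x, x) = 0) ∧ (∀ x y, Ψ (x, y) = Ψ (y, x)) ∧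
  ∀ (k : ℕ) (x : Fin k → X) (η : Fin k → ℝ), (∑ i, η i) = 0 →
    (∑ i, ∑ j, Ψ (x i, x j) * η i * η j) ≤ 0

open Matrix
open scoped Nat

/-! If `Ψ` is conditionally of negative type and `z` is any point, the matrix
`B i j = Ψ (x i, z) + Ψ (x j, z) - Ψ (x i, x j)` is positive semidefinite: this is the defining
inequality for the points `z, x 1, …, x k` with weights `-∑ ξ, ξ 1, …, ξ k`. By the Schur product
theorem and the power series of `exp`, so is its entrywise exponential `e^{t B}` for `t ≥ 0`, and
`e^{-t Ψ (x i, x j)} = d i * e^{t B i j} * d j` with `d i = e^{-t Ψ (x i, z)}`.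
Conversely, when `∑ ξ = 0` the function `t ↦ ∑ e^{-t Ψ (x i, x j)} ξ i ξ j` vanishes at `0` and is
nonnegative for `t > 0`, so its derivative `-∑ Ψ (x i, x j) ξ i ξ j` at `0` is nonnegative. -/

namespace Matrix

variable {ι : Type*} [Fintype ι]

theorem dotProduct_mulVec_eq_sum_sum {R : Type*} [CommSemiring R] (M : Matrix ι ι R)
    (v w : ι → R) : v ⬝ᵥ (M *ᵥ w) = ∑ i, ∑ j, M i j * v i * w j := by
  simp only [dotProduct, mulVec, Finset.mul_sum]
  exact Finset.sum_congr rfl fun i _ => Finset.sum_congr rfl fun j _ => by ring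

theorem PosSemidef.map_pow {𝕜 : Type*} [RCLike 𝕜] {A : Matrix ι ι 𝕜} (hA : A.PosSemidef)
    (n : ℕ) : (A.map (· ^ n)).PosSemidef := by
  induction n with
  | zero =>
    convert posSemidef_vecMulVec_self_star (1 : ι → 𝕜)
    ext i j
    simp [vecMulVec_apply]
  | succ n ih =>
    convert ih.hadamard hA using 1
    ext i j
    simp [pow_succ]

theorem PosSemidef.map_exp {A : Matrix ι ι ℝ} (hA : A.PosSemidef) :
    (A.map Real.exp).PosSemidef := by
  refine .of_dotProduct_mulVec_nonneg (hA.isHermitian.map _ fun _ => rfl) fun v => ?_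
  have hseries : HasSum (fun n : ℕ => star v ⬝ᵥ (((n !⁻¹ : ℝ) • A.map (· ^ n)) *ᵥ v))
      (star v ⬝ᵥ (A.map Real.exp *ᵥ v)) := by
    simp only [dotProduct, mulVec, smul_apply, map_apply, Real.exp_eq_exp_ℝ]
    exact hasSum_sum fun i _ => (hasSum_sum fun j _ =>
      (NormedSpace.exp_series_hasSum_exp' (A i j)).mul_right (v j)).mul_left (star v i)
  exact hseries.nonneg fun n =>
    ((hA.map_pow n).smul (by positivity)).dotProduct_mulVec_nonneg v

theorem PosSemidef.map_ofReal {𝕜 : Type*} [RCLike 𝕜] {A : Matrix ι ι ℝ} (hA : A.PosSemidef) :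
    (A.map (algebraMap ℝ 𝕜)).PosSemidef := by
  obtain ⟨C, rfl⟩ : ∃ C : Matrix ι ι ℝ, A = Cᴴ * C := by
    classical
    open scoped MatrixOrder in
    exact CStarAlgebra.nonneg_iff_eq_star_mul_self.mp hA.nonneg
  rw [Matrix.map_mul, conjTranspose_map _ fun r => (RCLike.conj_ofReal r).symm]
  exact posSemidef_conjTranspose_mul_self _

end Matrix

theorem HasDerivAt.nonneg_of_le_right {f : ℝ → ℝ} {f' a : ℝ} (hf : HasDerivAt f f' a)
    (h : ∀ t > a, f a ≤ f t) : 0 ≤ f' :=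
  ge_of_tendsto hf.tendsto_slope_zero_right <| eventually_nhdsWithin_of_forall fun t ht =>
    smul_nonneg (inv_nonneg.2 (le_of_lt ht)) (sub_nonneg.2 (h (a + t) (lt_add_of_pos_right a ht)))

theorem quadForm_nonpos_of_exp_neg_mul_nonneg {ι : Type*} [Fintype ι] (M : ι → ι → ℝ)
    {ξ : ι → ℝ} (hξ : ∑ i, ξ i = 0)
    (h : ∀ t > 0, 0 ≤ ∑ i, ∑ j, Real.exp (-(t * M i j)) * ξ i * ξ j) :
    ∑ i, ∑ j, M i j * ξ i * ξ j ≤ 0 := by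
  have hderiv : HasDerivAt (fun t => ∑ i, ∑ j, Real.exp (-(t * M i j)) * ξ i * ξ j)
      (∑ i, ∑ j, -M i j * ξ i * ξ j) 0 := by
    refine HasDerivAt.fun_sum fun i _ => HasDerivAt.fun_sum fun j _ => ?_
    simpa using (((hasDerivAt_mul_const (x := (0 : ℝ)) (M i j)).neg.exp.mul_const (ξ i)).mul_const
      (ξ j))
  have hzero : ∑ i, ∑ j, Real.exp (-(0 * M i j)) * ξ i * ξ j = 0 := by
    simp [← Finset.sum_mul_sum, hξ]
  have := hderiv.nonneg_of_le_right fun t ht => hzero.trans_le (h t ht)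
  simpa [Finset.sum_neg_distrib] using this

section Kernel

variable {X : Type*} [TopologicalSpace X]

theorem IsCondNegKernel.posSemidef_of_basepoint {Ψ : X × X → ℝ} (hΨ : IsCondNegKernel Ψ)
    {k : ℕ} (x : Fin k → X) (z : X) :
    (Matrix.of fun i j => Ψ (x i, z) + Ψ (x j, z) - Ψ (x i, x j)).PosSemidef := by
  obtain ⟨-, hdiag, hsymm, hneg⟩ := hΨ
  refine .of_dotProduct_mulVec_nonneg ?_ fun ξ => ?_
  · ext i j
    simp only [conjTranspose_apply, of_apply, star_trivial, hsymm (x i) (x j)]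
    ring
  set s := ∑ i, ξ i
  set S := ∑ i, Ψ (x i, z) * ξ i with hS
  set Q := ∑ i, ∑ j, Ψ (x i, x j) * ξ i * ξ j
  have hform : star ξ ⬝ᵥ (of (fun i j => Ψ (x i, z) + Ψ (x j, z) - Ψ (x i, x j)) *ᵥ ξ) =
      S * s + s * S - Q := by
    rw [dotProduct_mulVec_eq_sum_sum, Finset.sum_mul_sum, Finset.sum_mul_sum]
    simp only [Q, ← Finset.sum_add_distrib, ← Finset.sum_sub_distrib]
    exact Finset.sum_congr rfl fun i _ => Finset.sum_congr rfl fun j _ => by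
      simp only [of_apply, star_trivial]
      ring
  let y : Fin (k + 1) → X := Fin.cons z x
  let η : Fin (k + 1) → ℝ := Fin.cons (-s) ξ
  have hcons : ∑ i, ∑ j, Ψ (y i, y j) * η i * η j = Q - S * s - s * S := by
    simp only [y, η, Fin.sum_univ_succ, Fin.cons_zero, Fin.cons_succ, hdiag, hsymm z,
      Finset.sum_add_distrib, mul_right_comm _ (-s), ← Finset.sum_mul, ← hS]
    ring
  have := hneg (k + 1) y η (by simp [η, Fin.sum_univ_succ, s])
  linarith

theorem IsCondNegKernel.posSemidef_exp_neg_mul {Ψ : X × X → ℝ} (hΨ : IsCondNegKernel Ψ)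
    {t : ℝ} (ht : 0 ≤ t) {k : ℕ} (x : Fin k → X) :
    (Matrix.of fun i j => Real.exp (-(t * Ψ (x i, x j)))).PosSemidef := by
  cases k with
  | zero =>
    convert PosSemidef.zero
    ext i
    exact i.elim0
  | succ k =>
    let d i := Real.exp (-(t * Ψ (x i, x 0)))
    have h := (((hΨ.posSemidef_of_basepoint x (x 0)).smul ht).map_exp).conjTranspose_mul_mul_same
      (diagonal d)
    convert h using 1
    ext i j
    simp only [diagonal_conjTranspose, star_trivial, diagonal_mul, mul_diagonal, of_apply,
      map_apply, Matrix.smul_apply, smul_eq_mul, d, ← Real.exp_add]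
    congr 1
    ring

theorem isPosTypeKernel_of_posSemidef {Φ : X × X → ℂ} (hΦ : Continuous Φ)
    (hpos : ∀ (k : ℕ) (x : Fin k → X), (Matrix.of fun i j => Φ (x i, x j)).PosSemidef) :
    IsPosTypeKernel Φ :=
  ⟨hΦ, fun k x η => by
    simpa [dotProduct_mulVec_eq_sum_sum] using (hpos k x).dotProduct_mulVec_nonneg (star η)⟩

theorem IsPosTypeKernel.sum_mul_mul_nonneg {K : X × X → ℝ}
    (h : IsPosTypeKernel fun q => (K q : ℂ)) (k : ℕ) (x : Fin k → X) (ξ : Fin k → ℝ) :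
    0 ≤ ∑ i, ∑ j, K (x i, x j) * ξ i * ξ j := by
  have := h.2 k x fun i => ξ i
  simp only [Complex.conj_ofReal] at this
  exact_mod_cast this

end Kernel

/-- Schoenberg's theorem: a continuous symmetric kernel `Ψ` vanishing on the
diagonal is conditionally of negative type iff `e^{-tΨ}` is of positive type
for every `t ≥ 0`. -/
theorem condNegKernel_iff_exp_posType {X : Type*} [TopologicalSpace X]
    (Ψ : X × X → ℝ) (hcont : Continuous Ψ) (hdiag : ∀ x, Ψ (x, x) = 0)
    (hsymm : ∀ x y, Ψ (x, y) = Ψ (y, x)) :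
    IsCondNegKernel Ψ ↔
      ∀ t : ℝ, 0 ≤ t →
        IsPosTypeKernel (fun q : X × X => (Real.exp (-(t * Ψ q)) : ℂ)) := by
  refine ⟨fun hΨ t ht => isPosTypeKernel_of_posSemidef (by fun_prop) fun k x => ?_,
    fun h => ⟨hcont, hdiag, hsymm, fun k x ξ hξ => ?_⟩⟩
  · exact (hΨ.posSemidef_exp_neg_mul ht x).map_ofReal
  · exact quadForm_nonpos_of_exp_neg_mul_nonneg (fun i j => Ψ (x i, x j)) hξ fun t ht =>
      IsPosTypeKernel.sum_mul_mul_nonneg (h t ht.le) k x ξ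
end
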